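/- arXiv:2509.10897 — 2 statements merged into one kernel-verified Lean document; each statement's English description precedes it below -/
import Mathlib

section
/- Let Φ = [Φ_1 Φ_2 … Φ_L] be the horizontal concatenation of matrices Φ_l = (I_H ⊗ S_l) diag(t_l), with S_l as in the SD-CASSI sensing model. Then Φ Φᵀ = Σ_{l=1}^L Φ_l Φ_lᵀ is a positive semidefinite diagonal matrix, i.e., Φ Φᵀ = diag(λ) for some vector λ with λ ≥ 0 componentwise. -/
/-!
Every column of `Φ` has at most one nonzero entry: `diag(t_l)` only rescales columns, and a column
of `I_H ⊗ S_l` is a standard basis vector. Hence distinct rows of `Φ` have disjoint supports, so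
they are orthogonal and `Φ Φᵀ` is diagonal, with diagonal entries the squared row norms.
-/

open Matrix Kronecker

namespace Matrix

variable {l m n p α : Type*}

def RowsDisjointlySupported [Mul α] [Zero α] (A : Matrix m n α) : Prop :=
  ∀ ⦃i i'⦄, i ≠ i' → ∀ j, A i j * A i' j = 0

namespace RowsDisjointlySupported

theorem one [DecidableEq n] [MulZeroOneClass α] :
    RowsDisjointlySupported (1 : Matrix n n α) := by
  intro i i' hii' j
  by_cases hij : i = j
  · subst hij
    simp [one_apply_ne' hii']
  · simp [one_apply_ne hij]

theorem mul_diagonal [Fintype n] [DecidableEq n] [CommSemiring α] {A : Matrix m n α}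
    (hA : A.RowsDisjointlySupported) (d : n → α) :
    RowsDisjointlySupported (A * diagonal d) := by
  intro i i' hii' j
  simp only [Matrix.mul_diagonal]
  rw [mul_mul_mul_comm, hA hii', zero_mul]

theorem kronecker [CommMonoidWithZero α] {A : Matrix l m α} {B : Matrix n p α}
    (hA : A.RowsDisjointlySupported) (hB : B.RowsDisjointlySupported) :
    RowsDisjointlySupported (A ⊗ₖ B) := by
  rintro ⟨a, b⟩ ⟨a', b'⟩ hne ⟨c, d⟩
  simp only [kronecker_apply]
  rw [mul_mul_mul_comm]
  by_cases ha : a = a'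
  · subst ha
    rw [hB (fun hb => hne (by rw [hb])) d, mul_zero]
  · rw [hA ha c, zero_mul]

theorem isDiag_mul_transpose [Fintype n] [NonUnitalNonAssocSemiring α] {A : Matrix m n α}
    (hA : A.RowsDisjointlySupported) : (A * Aᵀ).IsDiag := fun i i' hii' => by
  simp only [mul_apply, transpose_apply]
  exact Finset.sum_eq_zero fun j _ => hA hii' j

end RowsDisjointlySupported

theorem rowsDisjointlySupported_shift [MulZeroOneClass α] {a b : ℕ} (k : ℕ) :
    RowsDisjointlySupported
      (of fun (i : Fin a) (j : Fin b) => if (i : ℕ) = k + j then (1 : α) else 0) := by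
  intro i i' hii' j
  by_cases hi : (i : ℕ) = k + j
  · have hi' : (i' : ℕ) ≠ k + j := fun h => hii' (Fin.ext (hi.trans h.symm))
    simp [hi']
  · simp [hi]

theorem diag_mul_transpose_nonneg [Fintype n] [CommSemiring α] [LinearOrder α]
    [IsOrderedRing α] [ExistsAddOfLE α] (A : Matrix m n α) (i : m) : 0 ≤ (A * Aᵀ) i i := by
  simp only [mul_apply, transpose_apply]
  exact Finset.sum_nonneg fun j _ => mul_self_nonneg _

/-- Horizontal concatenation `[A_1 … A_L]` of a family of matrices with the same rows. -/
theorem of_concat_mul_transpose [Fintype l] [Fintype n] [NonUnitalNonAssocSemiring α]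
    (A : l → Matrix m n α) :
    (of fun i (p : l × n) => A p.1 i p.2) * (of fun i (p : l × n) => A p.1 i p.2)ᵀ =
      ∑ k, A k * (A k)ᵀ := by
  ext i i'
  simp only [mul_apply, transpose_apply, sum_apply, of_apply, Fintype.sum_prod_type]

end Matrix

open Matrix.RowsDisjointlySupported in
/-- For `Φ = [Φ_1 … Φ_L]` with `Φ_l = (I_H ⊗ S_l) diag(t_l)`,
the Gram matrix `Φ Φᵀ = ∑ l, Φ_l Φ_lᵀ` is a positive semidefinite
diagonal matrix `diag(λ)`, `λ ⪰ 0`. -/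
theorem gram_of_sd_cassi_sensing_matrix_diagonal
    (H W L s : ℕ) (t : Fin L → Fin H × Fin W → ℝ) :
    let S : Fin L → Matrix (Fin (W + s * (L - 1))) (Fin W) ℝ := fun l =>
      Matrix.of fun i j => if (i : ℕ) = s * (l : ℕ) + (j : ℕ) then 1 else 0
    let Φl : Fin L → Matrix (Fin H × Fin (W + s * (L - 1))) (Fin H × Fin W) ℝ := fun l =>
      ((1 : Matrix (Fin H) (Fin H) ℝ) ⊗ₖ S l) * Matrix.diagonal (t l)
    let Φ : Matrix (Fin H × Fin (W + s * (L - 1))) (Fin L × (Fin H × Fin W)) ℝ :=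
      Matrix.of fun i p => Φl p.1 i p.2
    ∃ lam : Fin H × Fin (W + s * (L - 1)) → ℝ,
      (∀ i, 0 ≤ lam i) ∧ Φ * Φᵀ = Matrix.diagonal lam ∧
      Φ * Φᵀ = ∑ l, Φl l * (Φl l)ᵀ := by
  intro S Φl Φ
  have hΦl (l : Fin L) : (Φl l).RowsDisjointlySupported :=
    mul_diagonal (one.kronecker (rowsDisjointlySupported_shift _)) _
  have hΦ : Φ.RowsDisjointlySupported := fun _ _ hii' p => hΦl p.1 hii' p.2
  exact ⟨(Φ * Φᵀ).diag, diag_mul_transpose_nonneg Φ, hΦ.isDiag_mul_transpose.diagonal_diag.symm,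
    of_concat_mul_transpose Φl⟩
end

section
/- Any fixed point (X*, P*) of the iteration X^{k+1} = Z − μ div P^{ref} + μ div P^{(k)}, P^{(k+1)}_{:,m,n,l} = (P^{(k)}_{:,m,n,l} + τ(∇X^{k+1})_{:,m,n,l})/(1 + τ‖(∇X^{k+1})_{:,m,n,l}‖), with τ > 0, satisfies the Euler–Lagrange equation X* − Z − μ div P^{X*} + μ div P^{ref} = 0, where P^{X*}_{:,m,n,l} = (∇X*)_{:,m,n,l}/‖(∇X*)_{:,m,n,l}‖ whenever the gradient is nonzero. -/
/-- Horizontal forward difference with Neumann (zero at boundary) conditions. -/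
noncomputable def gradH (H W L : ℕ) (X : Fin H → Fin W → Fin L → ℝ)
    (m : Fin H) (n : Fin W) (l : Fin L) : ℝ :=
  if h : (m : ℕ) + 1 < H then X ⟨(m : ℕ) + 1, h⟩ n l - X m n l else 0

/-- Vertical forward difference with Neumann (zero at boundary) conditions. -/
noncomputable def gradV (H W L : ℕ) (X : Fin H → Fin W → Fin L → ℝ)
    (m : Fin H) (n : Fin W) (l : Fin L) : ℝ :=
  if h : (n : ℕ) + 1 < W then X m ⟨(n : ℕ) + 1, h⟩ l - X m n l else 0

/-- Pointwise Euclidean norm of the discrete spatial gradient. -/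
noncomputable def gnorm (H W L : ℕ) (X : Fin H → Fin W → Fin L → ℝ)
    (m : Fin H) (n : Fin W) (l : Fin L) : ℝ :=
  Real.sqrt (gradH H W L X m n l ^ 2 + gradV H W L X m n l ^ 2)

/-- Discrete isotropic 3D total variation. -/
noncomputable def fTV (H W L : ℕ) (X : Fin H → Fin W → Fin L → ℝ) : ℝ :=
  ∑ m, ∑ n, ∑ l, gnorm H W L X m n l

/-- First component of the normalized-gradient dual field `P^X`. -/
noncomputable def P1 (H W L : ℕ) (X : Fin H → Fin W → Fin L → ℝ)
    (m : Fin H) (n : Fin W) (l : Fin L) : ℝ :=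
  if gnorm H W L X m n l = 0 then 0 else gradH H W L X m n l / gnorm H W L X m n l

/-- Second component of the normalized-gradient dual field `P^X`. -/
noncomputable def P2 (H W L : ℕ) (X : Fin H → Fin W → Fin L → ℝ)
    (m : Fin H) (n : Fin W) (l : Fin L) : ℝ :=
  if gnorm H W L X m n l = 0 then 0 else gradV H W L X m n l / gnorm H W L X m n l

/-- Discrete divergence, the negative adjoint of the discrete gradient. -/
noncomputable def divOp (H W L : ℕ) (Q1 Q2 : Fin H → Fin W → Fin L → ℝ)
    (m : Fin H) (n : Fin W) (l : Fin L) : ℝ :=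
  Q1 m n l - (if h : 0 < (m : ℕ) then Q1 ⟨(m : ℕ) - 1, by have := m.2; omega⟩ n l else 0)
    + Q2 m n l - (if h : 0 < (n : ℕ) then Q2 m ⟨(n : ℕ) - 1, by have := n.2; omega⟩ l else 0)

/-! A fixed point of the dual step `p ↦ (p + τ g) / (1 + τ ‖g‖)` satisfies `p ‖g‖ = g`, so the
fixed dual field is the normalized gradient wherever the gradient is nonzero; the primal fixed-point
equation is then the Euler–Lagrange equation with `P^{X*} = P*`. -/

theorem gnorm_nonneg (H W L : ℕ) (X : Fin H → Fin W → Fin L → ℝ) (m : Fin H) (n : Fin W)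
    (l : Fin L) : 0 ≤ gnorm H W L X m n l :=
  Real.sqrt_nonneg _

theorem mul_eq_of_eq_add_mul_div_one_add_mul {τ s p g : ℝ} (hτ : 0 < τ) (hs : 0 ≤ s)
    (h : p = (p + τ * g) / (1 + τ * s)) : p * s = g := by
  rw [eq_div_iff (by positivity)] at h
  exact mul_left_cancel₀ hτ.ne' (by linarith)

theorem eq_div_of_eq_add_mul_div_one_add_mul {τ s p g : ℝ} (hτ : 0 < τ) (hs : 0 ≤ s)
    (hs₀ : s ≠ 0) (h : p = (p + τ * g) / (1 + τ * s)) : p = g / s :=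
  eq_div_of_mul_eq hs₀ (mul_eq_of_eq_add_mul_div_one_add_mul hτ hs h)

/-- Any fixed point of the primal-dual iteration satisfies the Euler–Lagrange
equation `X* - Z - μ div P^{X*} + μ div P^{ref} = 0`, where `P^{X*}` agrees with
the normalized gradient of `X*` wherever that gradient is nonzero. -/
theorem fixed_point_satisfies_euler_lagrange (H W L : ℕ) (τ μ : ℝ) (hτ : 0 < τ)
    (Z Pref1 Pref2 Xs Ps1 Ps2 : Fin H → Fin W → Fin L → ℝ)
    (hX : ∀ m n l, Xs m n l =
      Z m n l - μ * divOp H W L Pref1 Pref2 m n l + μ * divOp H W L Ps1 Ps2 m n l)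
    (hP1 : ∀ m n l, Ps1 m n l =
      (Ps1 m n l + τ * gradH H W L Xs m n l) / (1 + τ * gnorm H W L Xs m n l))
    (hP2 : ∀ m n l, Ps2 m n l =
      (Ps2 m n l + τ * gradV H W L Xs m n l) / (1 + τ * gnorm H W L Xs m n l)) :
    ∃ Q1 Q2 : Fin H → Fin W → Fin L → ℝ,
      (∀ m n l, gnorm H W L Xs m n l ≠ 0 →
        Q1 m n l = gradH H W L Xs m n l / gnorm H W L Xs m n l ∧
        Q2 m n l = gradV H W L Xs m n l / gnorm H W L Xs m n l) ∧
      (∀ m n l, Xs m n l - Z m n l - μ * divOp H W L Q1 Q2 m n l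
          + μ * divOp H W L Pref1 Pref2 m n l = 0) := by
  refine ⟨Ps1, Ps2, fun m n l hg => ⟨?_, ?_⟩, fun m n l => by linarith [hX m n l]⟩
  · exact eq_div_of_eq_add_mul_div_one_add_mul hτ (gnorm_nonneg ..) hg (hP1 m n l)
  · exact eq_div_of_eq_add_mul_div_one_add_mul hτ (gnorm_nonneg ..) hg (hP2 m n l)
end
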